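/- arXiv:2306.11668 — 2 statements merged into one kernel-verified Lean document; each statement's English description precedes it below -/
import Mathlib

section
/- Let P be a symmetric real n×n matrix with nonnegative entries. Then the eigenspace of P corresponding to its largest eigenvalue λ₁(P) admits an orthonormal basis consisting of vectors all of whose components are nonnegative. -/
/-!
Let `μ` be the largest eigenvalue. Then `μ • 1 - P` is positive semidefinite, so
`x ⬝ᵥ P *ᵥ x ≤ μ * (x ⬝ᵥ x)` with equality exactly on the top eigenspace `E`. As `P ≥ 0`,
`x ⬝ᵥ P *ᵥ x ≤ |x| ⬝ᵥ P *ᵥ |x|`, so `E` is closed under `x ↦ |x|`, hence under `⊓`.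

In a subspace closed under `|·|`, a nonnegative vector `u` of minimal support is an atom: a vector
`x` of the subspace vanishing at one point of `support u` vanishes on all of it, since `|x| ⊓ u`
has strictly smaller support. So the subspace is `ℝ u` plus its part vanishing on `support u`,
which is again closed under `|·|`, orthogonal to `u` and of smaller dimension; by induction we
get orthonormal nonnegative vectors (with pairwise disjoint supports) spanning it.
-/

open Matrix Function

theorem Submodule.inf_mem_of_forall_abs_mem {𝕜 M : Type*} [DivisionRing 𝕜] [NeZero (2 : 𝕜)]
    [Lattice M] [AddCommGroup M] [Module 𝕜 M] [IsOrderedAddMonoid M] {E : Submodule 𝕜 M}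
    (hE : ∀ x ∈ E, |x| ∈ E) {x y : M} (hx : x ∈ E) (hy : y ∈ E) : x ⊓ y ∈ E := by
  rw [inf_eq_half_smul_add_sub_abs_sub' 𝕜]
  exact E.smul_mem _ (E.sub_mem (E.add_mem hx hy) (hE _ (E.sub_mem hy hx)))

section LatticeSubspace

variable {ι : Type*} {E : Submodule ℝ (ι → ℝ)}

theorem eq_zero_on_support_of_minimal_support (hE : ∀ x ∈ E, |x| ∈ E) {u : ι → ℝ}
    (hu : u ∈ E) (hu0 : 0 ≤ u) (hmin : ∀ v ∈ E, 0 ≤ v → support v ⊂ support u → v = 0)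
    {x : ι → ℝ} (hx : x ∈ E) {i₀ : ι} (hi₀ : u i₀ ≠ 0) (hxi₀ : x i₀ = 0)
    {i : ι} (hi : u i ≠ 0) : x i = 0 := by
  have hv : |x| ⊓ u = 0 := by
    refine hmin _ (E.inf_mem_of_forall_abs_mem hE (hE x hx) hu) (le_inf (abs_nonneg x) hu0) ?_
    refine LE.le.ssubset_of_mem_notMem (fun j hj huj => hj ?_) hi₀ ?_
    · simp [huj]
    · simpa [hxi₀] using hu0 i₀
  have := congrFun hv i
  simp only [Pi.inf_apply, Pi.abs_apply, Pi.zero_apply] at this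
  rcases min_eq_iff.1 this with ⟨h, -⟩ | ⟨h, -⟩
  · exact abs_eq_zero.1 h
  · exact absurd h hi

theorem exists_unit_nonneg_of_minimal_support [Fintype ι] (hE : ∀ x ∈ E, |x| ∈ E) (hE0 : E ≠ ⊥) :
    ∃ u ∈ E, 0 ≤ u ∧ u ⬝ᵥ u = 1 ∧ ∀ v ∈ E, 0 ≤ v → support v ⊂ support u → v = 0 := by
  obtain ⟨x, hx, hx0⟩ := Submodule.exists_mem_ne_zero_of_ne_bot hE0
  obtain ⟨u, ⟨huE, hu0, hu⟩, hmin⟩ := (InvImage.wf support wellFounded_lt).has_min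
    {v | v ∈ E ∧ 0 ≤ v ∧ v ≠ 0} ⟨|x|, hE x hx, abs_nonneg x, mt (Pi.abs_eq_zero x).1 hx0⟩
  have hpos : 0 < u ⬝ᵥ u := (Finset.sum_nonneg fun i _ => mul_self_nonneg (u i)).lt_of_ne
    (Ne.symm (mt dotProduct_self_eq_zero.1 hu))
  have hc : (√(u ⬝ᵥ u))⁻¹ ≠ 0 := by positivity
  refine ⟨(√(u ⬝ᵥ u))⁻¹ • u, E.smul_mem _ huE, ?_, ?_, fun v hv hv0 hvu => ?_⟩
  · exact smul_nonneg (by positivity) hu0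
  · rw [smul_dotProduct, dotProduct_smul, smul_smul, smul_eq_mul, ← mul_inv,
      Real.mul_self_sqrt hpos.le]
    exact inv_mul_cancel₀ hpos.ne'
  · by_contra hv'
    rw [support_const_smul_of_ne_zero _ _ hc] at hvu
    exact hmin v ⟨hv, hv0, hv'⟩ hvu

theorem sub_smul_mem_pi_support (hE : ∀ x ∈ E, |x| ∈ E) {u : ι → ℝ}
    (hu : u ∈ E) (hu0 : 0 ≤ u) (hmin : ∀ v ∈ E, 0 ≤ v → support v ⊂ support u → v = 0)
    {x : ι → ℝ} (hx : x ∈ E) {i₀ : ι} (hi₀ : u i₀ ≠ 0) :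
    x - (x i₀ / u i₀) • u ∈ Submodule.pi (support u) fun _ => (⊥ : Submodule ℝ ℝ) := by
  refine Submodule.mem_pi.2 fun i hi => (Submodule.mem_bot ℝ).2 ?_
  refine eq_zero_on_support_of_minimal_support hE hu hu0 hmin
    (E.sub_mem hx (E.smul_mem _ hu)) hi₀ ?_ hi
  simp [hi₀]

theorem dotProduct_eq_zero_of_mem_pi_support [Fintype ι] {u v : ι → ℝ}
    (hv : v ∈ Submodule.pi (support u) fun _ => (⊥ : Submodule ℝ ℝ)) : u ⬝ᵥ v = 0 := by
  refine Finset.sum_eq_zero fun i _ => ?_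
  by_cases hi : u i = 0
  · simp [hi]
  · simp [(Submodule.mem_bot ℝ).1 (Submodule.mem_pi.1 hv i hi)]

theorem exists_finset_nonneg_orthonormal_spanning [Fintype ι] (hE : ∀ x ∈ E, |x| ∈ E) :
    ∃ s : Finset (ι → ℝ), (∀ v ∈ s, v ∈ E ∧ 0 ≤ v ∧ v ⬝ᵥ v = 1) ∧
      (s : Set (ι → ℝ)).Pairwise (fun v w => v ⬝ᵥ w = 0) ∧ E ≤ Submodule.span ℝ s := by
  classical
  induction hd : Module.finrank ℝ E using Nat.strong_induction_on generalizing E with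
  | _ d ih =>
  rcases eq_or_ne E ⊥ with rfl | hE0
  · exact ⟨∅, by simp, by simp, by simp⟩
  obtain ⟨u, huE, hu0, hu1, hmin⟩ := exists_unit_nonneg_of_minimal_support hE hE0
  have hu : u ≠ 0 := by rintro rfl; simp at hu1
  obtain ⟨i₀, hi₀⟩ := support_nonempty_iff.2 hu
  set K := Submodule.pi (support u) fun _ => (⊥ : Submodule ℝ ℝ)
  have hK : ∀ {x : ι → ℝ}, x ∈ K ↔ ∀ i, u i ≠ 0 → x i = 0 := by
    simp [K, Submodule.mem_pi]
  have hE'abs : ∀ x ∈ E ⊓ K, |x| ∈ E ⊓ K := fun x hx =>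
    ⟨hE x hx.1, hK.2 fun i hi => by simp [hK.1 hx.2 i hi]⟩
  have huK : u ∉ K := fun h => hu (funext fun i => by_contra fun hi => hi (hK.1 h i hi))
  have hlt : Module.finrank ℝ ↥(E ⊓ K) < d := hd ▸ Submodule.finrank_lt_finrank_of_lt
    (inf_le_left.lt_of_ne fun h => huK (h.ge huE).2)
  obtain ⟨s, hs, hpair, hspan⟩ := ih _ hlt hE'abs rfl
  refine ⟨insert u s, ?_, ?_, fun x hx => ?_⟩
  · simp only [Finset.mem_insert, forall_eq_or_imp]
    exact ⟨⟨huE, hu0, hu1⟩, fun v hv => ⟨(hs v hv).1.1, (hs v hv).2⟩⟩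
  · refine (Finset.coe_insert u s ▸ Set.pairwise_insert).2 ⟨hpair, fun v hv _ => ?_⟩
    have huv := dotProduct_eq_zero_of_mem_pi_support (hs v hv).1.2
    exact ⟨huv, dotProduct_comm u v ▸ huv⟩
  · have hx' := sub_smul_mem_pi_support hE huE hu0 hmin hx hi₀
    rw [← sub_add_cancel x ((x i₀ / u i₀) • u)]
    refine Submodule.add_mem _ ?_ ?_
    · exact Submodule.span_mono (by simp) (hspan ⟨E.sub_mem hx (E.smul_mem _ huE), hx'⟩)
    · exact Submodule.smul_mem _ _ (Submodule.subset_span (by simp))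

theorem exists_nonneg_orthonormal_family_spanning [Fintype ι] (hE : ∀ x ∈ E, |x| ∈ E) :
    ∃ (d : ℕ) (b : Fin d → ι → ℝ), (∀ i j, b i ⬝ᵥ b j = if i = j then 1 else 0) ∧
      (∀ j, 0 ≤ b j) ∧ (∀ j, b j ∈ E) ∧ E ≤ Submodule.span ℝ (Set.range b) := by
  obtain ⟨s, hs, hpair, hspan⟩ := exists_finset_nonneg_orthonormal_spanning hE
  let b : Fin s.card → ι → ℝ := fun j => s.equivFin.symm j
  have hb : ∀ j, b j ∈ s := fun j => (s.equivFin.symm j).2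
  have hrange : Set.range b = s := by
    simp only [b, ← comp_apply (f := Subtype.val), Set.range_comp,
      Equiv.range_eq_univ, Set.image_univ, Subtype.range_coe_subtype, Finset.setOfPred_mem]
  refine ⟨s.card, b, fun i j => ?_, fun j => (hs _ (hb j)).2.1, fun j => (hs _ (hb j)).1,
    hrange ▸ hspan⟩
  split_ifs with h
  · exact h ▸ (hs _ (hb i)).2.2
  · exact hpair (hb i) (hb j) (Subtype.val_injective.ne (s.equivFin.symm.injective.ne h))

end LatticeSubspace

section TopEigenspace

variable {ι : Type*} [Fintype ι] {P : Matrix ι ι ℝ}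

theorem dotProduct_mulVec_le_abs (hP : ∀ i j, 0 ≤ P i j) (x : ι → ℝ) :
    x ⬝ᵥ P *ᵥ x ≤ |x| ⬝ᵥ P *ᵥ |x| := by
  simp only [dotProduct, mulVec, Finset.mul_sum, Pi.abs_apply]
  refine Finset.sum_le_sum fun i _ => Finset.sum_le_sum fun j _ => ?_
  calc x i * (P i j * x j) = P i j * (x i * x j) := by ring
    _ ≤ P i j * (|x i| * |x j|) :=
      mul_le_mul_of_nonneg_left (abs_mul (x i) (x j) ▸ le_abs_self _) (hP i j)
    _ = |x i| * (P i j * |x j|) := by ring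

variable [DecidableEq ι]

theorem Matrix.IsHermitian.posSemidef_smul_one_sub (hP : P.IsHermitian) {μ : ℝ}
    (hμ : ∀ i, hP.eigenvalues i ≤ μ) : (μ • 1 - P).PosSemidef := by
  set U : Matrix ι ι ℝ := ↑hP.eigenvectorUnitary
  have hU : U * star U = 1 := Unitary.coe_mul_star_self hP.eigenvectorUnitary
  convert (PosSemidef.diagonal (d := fun i => μ - hP.eigenvalues i)
    fun i => sub_nonneg.2 (hμ i)).mul_mul_conjTranspose_same U
  conv_lhs => rw [hP.spectral_theorem]
  rw [Unitary.conjStarAlgAut_apply, RCLike.ofReal_real_eq_id, id_comp,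
    show diagonal (fun i => μ - hP.eigenvalues i) = μ • 1 - diagonal hP.eigenvalues by
      rw [smul_one_eq_diagonal, diagonal_sub],
    mul_sub, sub_mul, Matrix.mul_smul, Matrix.mul_one, Matrix.smul_mul, ← star_eq_conjTranspose, hU]

theorem mulVec_abs_eq_smul_of_mulVec_eq_smul (hP : P.IsHermitian) (hnn : ∀ i j, 0 ≤ P i j)
    {μ : ℝ} (hμ : ∀ i, hP.eigenvalues i ≤ μ) {x : ι → ℝ} (hx : P *ᵥ x = μ • x) :
    P *ᵥ |x| = μ • |x| := by
  have hA := hP.posSemidef_smul_one_sub hμ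
  have hAy : ∀ y, (μ • 1 - P) *ᵥ y = μ • y - P *ᵥ y := fun y => by
    rw [sub_mulVec, smul_mulVec, one_mulVec]
  have habs : |x| ⬝ᵥ |x| = x ⬝ᵥ x := Finset.sum_congr rfl fun i _ => abs_mul_abs_self (x i)
  have hq : |x| ⬝ᵥ (μ • 1 - P) *ᵥ |x| ≤ 0 := calc
    |x| ⬝ᵥ (μ • 1 - P) *ᵥ |x| = μ * (x ⬝ᵥ x) - |x| ⬝ᵥ P *ᵥ |x| := by
      rw [hAy, dotProduct_sub, dotProduct_smul, habs, smul_eq_mul]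
    _ ≤ μ * (x ⬝ᵥ x) - x ⬝ᵥ P *ᵥ x := by gcongr; exact dotProduct_mulVec_le_abs hnn x
    _ = 0 := by rw [hx, dotProduct_smul, smul_eq_mul, sub_self]
  have hAx := (hA.dotProduct_mulVec_zero_iff |x|).1 (hq.antisymm (hA.dotProduct_mulVec_nonneg _))
  rw [hAy, sub_eq_zero] at hAx
  exact hAx.symm

end TopEigenspace

theorem top_eigenspace_has_nonneg_orthonormal_basis_general
    {n : ℕ} (P : Matrix (Fin n) (Fin n) ℝ)
    (hP : P.IsHermitian) (hpos : ∀ i j, 0 ≤ P i j) :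
    ∃ (d : ℕ) (b : Fin d → (Fin n → ℝ)),
      (∀ i j, b i ⬝ᵥ b j = if i = j then 1 else 0) ∧
      (∀ j v, 0 ≤ b j v) ∧
      (∀ j, P.mulVec (b j) = (⨆ i, hP.eigenvalues i) • b j) ∧
      (∀ x : Fin n → ℝ, P.mulVec x = (⨆ i, hP.eigenvalues i) • x →
        x ∈ Submodule.span ℝ (Set.range b)) := by
  set μ := ⨆ i, hP.eigenvalues i
  have hμ : ∀ i, hP.eigenvalues i ≤ μ := le_ciSup (Set.finite_range _).bddAbove
  have hE : ∀ x, x ∈ Module.End.eigenspace (toLin' P) μ ↔ P *ᵥ x = μ • x := fun x => by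
    rw [Module.End.mem_eigenspace_iff, toLin'_apply]
  obtain ⟨d, b, hortho, hnn, hbE, hspan⟩ := exists_nonneg_orthonormal_family_spanning
    fun x hx => (hE _).2 (mulVec_abs_eq_smul_of_mulVec_eq_smul hP hpos hμ ((hE x).1 hx))
  exact ⟨d, b, hortho, hnn, fun j => (hE _).1 (hbE j), fun x hx => hspan ((hE x).2 hx)⟩

/-- A symmetric real matrix with nonnegative entries admits an orthonormal
basis of its top eigenspace (for the largest eigenvalue `λ₁ = ⨆ i, eigenvalues i`) consisting
of vectors with nonnegative components. -/
theorem top_eigenspace_has_nonneg_orthonormal_basis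
    {n : ℕ} (hn : 0 < n) (P : Matrix (Fin n) (Fin n) ℝ)
    (hP : P.IsHermitian) (hpos : ∀ i j, 0 ≤ P i j) :
    ∃ (d : ℕ) (b : Fin d → (Fin n → ℝ)),
      (∀ i j, b i ⬝ᵥ b j = if i = j then 1 else 0) ∧
      (∀ j v, 0 ≤ b j v) ∧
      (∀ j, P.mulVec (b j) = (⨆ i, hP.eigenvalues i) • b j) ∧
      (∀ x : Fin n → ℝ, P.mulVec x = (⨆ i, hP.eigenvalues i) • x →
        x ∈ Submodule.span ℝ (Set.range b)) :=
  top_eigenspace_has_nonneg_orthonormal_basis_general P hP hpos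
end

section
/- Let z ∈ ℝ^V be a centered Gaussian vector with covariance K, let P be a symmetric matrix with nonnegative entries, let Π₁ be the orthogonal projection onto the top eigenspace of P, and set K' = c · P·E[σ(z)σ(z)ᵀ]·P with c > 0 and σ = ReLU. Then tr(K'·Π₁) ≥ (c/2)·λ₁(P)²·tr(K·Π₁). -/
/-!
Write `λ` for the top eigenvalue of `P` and `M = E[σ(z)σ(z)ᵀ]`. Since `P Q = λ Q = Q P`, the
right-hand side is `c λ² tr(M Q)`, and `tr(A Q) = ∑ⱼ qⱼᵀ A qⱼ` over the columns `qⱼ` of `Q`, so it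
suffices that `xᵀ K x ≤ 2 xᵀ M x` for entrywise nonnegative `x` and that `Q ≥ 0` entrywise.

`Q ≥ 0`: if `v` is a top eigenvector then so is `|v|`, because `P ≥ 0` gives
`vᵀ P v ≤ |v|ᵀ P |v|` and `λ` maximises the Rayleigh quotient; a symmetric projection whose
range is closed under `|·|` has nonnegative entries.

`xᵀ K x ≤ 2 xᵀ M x`: with `σ(t) = (t + |t|)/2`, `X = xᵀ z` and `Y = xᵀ |z|`, we have
`2 (xᵀ σ(z))² ≥ X² + X Y` because `|X| ≤ Y`, and `E[X Y] = 0` because `z` and `-z` have the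
same law.
-/

open MeasureTheory ProbabilityTheory
open scoped NNReal Matrix

/-- `z` is a centered Gaussian vector with covariance matrix `K`. -/
def IsCenteredGaussianVec {Ω V : Type*} [MeasurableSpace Ω] [Fintype V] (μ : Measure Ω)
    (z : Ω → V → ℝ) (K : Matrix V V ℝ) : Prop :=
  ∀ c : V → ℝ,
    μ.map (fun ω => ∑ v, c v * z ω v) =
      gaussianReal 0 (∑ v₁, ∑ v₂, c v₁ * K v₁ v₂ * c v₂).toNNReal

section

open Matrix Unitary

namespace Matrix

variable {V : Type*} [Fintype V]

lemma dotProduct_mulVec_le_abs {P : Matrix V V ℝ} (hP : ∀ i j, 0 ≤ P i j) (x : V → ℝ) :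
    x ⬝ᵥ P *ᵥ x ≤ |x| ⬝ᵥ P *ᵥ |x| := by
  simp only [dotProduct, mulVec, Finset.mul_sum, Pi.abs_apply]
  refine Finset.sum_le_sum fun i _ => Finset.sum_le_sum fun j _ => ?_
  calc x i * (P i j * x j) ≤ |x i * (P i j * x j)| := le_abs_self _
    _ = |x i| * (P i j * |x j|) := by rw [abs_mul, abs_mul, abs_of_nonneg (hP i j)]

lemma apply_nonneg_of_mulVec_abs_mulVec {Q : Matrix V V ℝ} (hQ : Q.IsHermitian) (hQQ : Q * Q = Q)
    (habs : ∀ x, Q *ᵥ |Q *ᵥ x| = |Q *ᵥ x|) (i j : V) : 0 ≤ Q i j := by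
  classical
  -- With `v = Q eⱼ`: `∑ₖ vₖ |vₖ| = |vⱼ|` by `habs` and `∑ₖ vₖ² = vⱼ` by idempotence.
  have hsymm : ∀ k, Q j k = Q k j := fun k => by simpa using hQ.apply k j
  have hfix : ∑ k, Q k j * |Q k j| = |Q j j| := by
    simpa [mulVec_single_one, mulVec, dotProduct, hsymm] using
      congrFun (habs (Pi.single j 1)) j
  have hdiag : ∑ k, Q k j * Q k j = Q j j := by
    simpa [mul_apply, hsymm] using congrFun (congrFun hQQ j) j
  have hzero : ∑ k, |Q k j| * (|Q k j| - Q k j) = 0 := by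
    have hnonneg : 0 ≤ Q j j := hdiag ▸ Finset.sum_nonneg fun k _ => mul_self_nonneg _
    simp only [mul_sub, Finset.sum_sub_distrib, abs_mul_abs_self]
    rw [hdiag]
    simp_rw [mul_comm |Q _ j|]
    rw [hfix, abs_of_nonneg hnonneg, sub_self]
  have hi := (Finset.sum_eq_zero_iff_of_nonneg fun k _ =>
    mul_nonneg (abs_nonneg (Q k j)) (sub_nonneg.2 (le_abs_self (Q k j)))).1 hzero i
      (Finset.mem_univ i)
  rcases mul_eq_zero.1 hi with h | h
  · exact (abs_eq_zero.1 h).ge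
  · exact (sub_eq_zero.1 h) ▸ abs_nonneg _

lemma IsHermitian.trace_mul_eq_sum_dotProduct_mulVec {Q : Matrix V V ℝ} (hQ : Q.IsHermitian)
    (hQQ : Q * Q = Q) (A : Matrix V V ℝ) : (A * Q).trace = ∑ j, Q j ⬝ᵥ A *ᵥ Q j := by
  have hsymm : ∀ i j, Q j i = Q i j := fun i j => by simpa using hQ.apply i j
  rw [← congrArg (A * ·) hQQ, ← Matrix.mul_assoc, trace_mul_cycle]
  refine Finset.sum_congr rfl fun j _ => ?_
  simp only [diag_apply, mul_apply, dotProduct, mulVec, Finset.mul_sum, hsymm _ j, mul_assoc]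

lemma IsHermitian.trace_mul_mul_mul_eq_sq_mul {P Q : Matrix V V ℝ} (hP : P.IsHermitian)
    (hQ : Q.IsHermitian) {r : ℝ} (hPQ : P * Q = r • Q) (M : Matrix V V ℝ) :
    (P * M * P * Q).trace = r ^ 2 * (M * Q).trace := by
  have hQP : Q * P = r • Q := by
    rw [← hP.eq, ← hQ.eq, ← conjTranspose_mul, hPQ, conjTranspose_smul, star_trivial]
  rw [Matrix.mul_assoc, hPQ, trace_mul_cycle, Matrix.smul_mul, Matrix.smul_mul, hQP]
  simp [trace_smul, trace_mul_comm Q M, sq, mul_assoc]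

variable [DecidableEq V]

lemma IsHermitian.posSemidef_smul_one_sub_s8 {P : Matrix V V ℝ}
    (hP : P.IsHermitian) {r : ℝ} (hr : ∀ i, hP.eigenvalues i ≤ r) : (r • 1 - P).PosSemidef := by
  have h : r • 1 - P =
      conjStarAlgAut ℝ _ hP.eigenvectorUnitary (diagonal fun i => r - hP.eigenvalues i) := by
    rw [← diagonal_sub, ← smul_one_eq_diagonal, map_sub, map_smul, map_one]
    conv_lhs => rw [hP.spectral_theorem]
    simp
  rw [h, conjStarAlgAut_apply]
  simp [isUnit_coe.posSemidef_star_right_conjugate_iff, hr]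

lemma IsHermitian.mulVec_eq_smul_of_le_dotProduct_mulVec {P : Matrix V V ℝ} (hP : P.IsHermitian)
    {r : ℝ} (hr : ∀ i, hP.eigenvalues i ≤ r) {x : V → ℝ} (hx : r * (x ⬝ᵥ x) ≤ x ⬝ᵥ P *ᵥ x) :
    P *ᵥ x = r • x := by
  have hpsd := hP.posSemidef_smul_one_sub_s8 hr
  have hquad : x ⬝ᵥ (r • 1 - P) *ᵥ x = r * (x ⬝ᵥ x) - x ⬝ᵥ P *ᵥ x := by
    simp [sub_mulVec, smul_mulVec, dotProduct_sub]
  have hzero : star x ⬝ᵥ (r • 1 - P) *ᵥ x = 0 :=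
    le_antisymm (by simpa [hquad] using hx) (by simpa using hpsd.dotProduct_mulVec_nonneg x)
  have := (hpsd.dotProduct_mulVec_zero_iff x).1 hzero
  rw [sub_mulVec, sub_eq_zero] at this
  simpa [smul_mulVec] using this.symm

lemma IsHermitian.mulVec_abs_eq_smul_abs {P : Matrix V V ℝ} (hP : P.IsHermitian)
    (hpos : ∀ i j, 0 ≤ P i j) {r : ℝ} (hr : ∀ i, hP.eigenvalues i ≤ r) {x : V → ℝ}
    (hx : P *ᵥ x = r • x) : P *ᵥ |x| = r • |x| := by
  refine hP.mulVec_eq_smul_of_le_dotProduct_mulVec hr ?_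
  calc r * (|x| ⬝ᵥ |x|) = x ⬝ᵥ P *ᵥ x := by
        simp only [hx, dotProduct, Finset.mul_sum, Pi.abs_apply, abs_mul_abs_self, Pi.smul_apply,
          smul_eq_mul, mul_left_comm]
    _ ≤ |x| ⬝ᵥ P *ᵥ |x| := dotProduct_mulVec_le_abs hpos x

end Matrix

variable {Ω : Type*} [MeasurableSpace Ω] {μ : Measure Ω}

lemma memLp_of_map_eq_gaussianReal {X : Ω → ℝ} {m : ℝ} {w : ℝ≥0}
    (h : μ.map X = gaussianReal m w) (p : ℝ≥0) : MemLp X p μ := by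
  have hX : AEMeasurable X μ := aemeasurable_of_map_neZero (by rw [h]; infer_instance)
  exact (memLp_map_measure_iff aestronglyMeasurable_id hX).1 (h ▸ memLp_id_gaussianReal p)

lemma integral_sq_of_map_eq_gaussianReal {X : Ω → ℝ} {w : ℝ≥0}
    (h : μ.map X = gaussianReal 0 w) : ∫ ω, X ω ^ 2 ∂μ = w := by
  have hX : AEMeasurable X μ := aemeasurable_of_map_neZero (by rw [h]; infer_instance)
  rw [← integral_map (f := fun x => x ^ 2) hX (by fun_prop), h,
    ← variance_fun_id_gaussianReal (μ := 0), variance_eq_integral aemeasurable_id']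
  simp

noncomputable def secondMoment {V : Type*} (μ : Measure Ω) (f : Ω → V → ℝ) : Matrix V V ℝ :=
  Matrix.of fun i j => ∫ ω, f ω i * f ω j ∂μ

lemma memLp_dotProduct_of_memLp {V : Type*} [Fintype V] {f : Ω → V → ℝ} {p : ENNReal}
    (hf : ∀ v, MemLp (fun ω => f ω v) p μ) (x : V → ℝ) : MemLp (fun ω => x ⬝ᵥ f ω) p μ :=
  memLp_finsetSum Finset.univ fun v _ => (hf v).const_mul (x v)

lemma integral_sq_dotProduct {V : Type*} [Fintype V] {f : Ω → V → ℝ}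
    (hf : ∀ v, MemLp (fun ω => f ω v) 2 μ) (x : V → ℝ) :
    ∫ ω, (x ⬝ᵥ f ω) ^ 2 ∂μ = x ⬝ᵥ secondMoment μ f *ᵥ x := by
  have hint : ∀ i j, Integrable (fun ω => f ω i * f ω j) μ := fun i j =>
    (hf i).integrable_mul (hf j)
  have hexpand : ∀ ω, (x ⬝ᵥ f ω) ^ 2 = ∑ i, ∑ j, x i * x j * (f ω i * f ω j) := fun ω => by
    simp only [sq, dotProduct, Finset.sum_mul_sum]
    exact Finset.sum_congr rfl fun i _ => Finset.sum_congr rfl fun j _ => by ring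
  simp_rw [hexpand]
  rw [integral_finsetSum _ fun i _ => integrable_finsetSum _ fun j _ => (hint i j).const_mul _]
  refine Finset.sum_congr rfl fun i _ => ?_
  rw [integral_finsetSum _ fun j _ => (hint i j).const_mul _, mulVec, dotProduct,
    Finset.mul_sum]
  refine Finset.sum_congr rfl fun j _ => ?_
  rw [integral_const_mul, secondMoment, of_apply]
  ring

namespace IsCenteredGaussianVec

variable {V : Type*} [Fintype V] {z : Ω → V → ℝ} {K : Matrix V V ℝ}

lemma map_dotProduct (hz : IsCenteredGaussianVec μ z K) (c : V → ℝ) :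
    μ.map (fun ω => c ⬝ᵥ z ω) = gaussianReal 0 (c ⬝ᵥ K *ᵥ c).toNNReal := by
  simpa [dotProduct, mulVec, Finset.mul_sum, mul_assoc] using hz c

lemma memLp_apply (hz : IsCenteredGaussianVec μ z K) (v : V) (p : ℝ≥0) :
    MemLp (fun ω => z ω v) p μ := by
  classical
  simpa using memLp_of_map_eq_gaussianReal (hz.map_dotProduct (Pi.single v 1)) p

lemma aemeasurable (hz : IsCenteredGaussianVec μ z K) : AEMeasurable z μ :=
  aemeasurable_pi_lambda z fun v => (hz.memLp_apply v 1).aestronglyMeasurable.aemeasurable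

-- Only an inequality: the definition clips a negative value of the quadratic form to variance 0.
lemma dotProduct_mulVec_le_integral_sq (hz : IsCenteredGaussianVec μ z K) (c : V → ℝ) :
    c ⬝ᵥ K *ᵥ c ≤ ∫ ω, (c ⬝ᵥ z ω) ^ 2 ∂μ := by
  rw [integral_sq_of_map_eq_gaussianReal (hz.map_dotProduct c)]
  exact Real.le_coe_toNNReal _

lemma map_neg [IsFiniteMeasure μ] (hz : IsCenteredGaussianVec μ z K) :
    μ.map (-z) = μ.map z := by
  classical
  -- Every functional `L` is `a ⬝ᵥ ·`, and `±a` give the same Gaussian law for `L (±z)`.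
  refine Measure.ext_of_charFunDual (funext fun L => ?_)
  set a : V → ℝ := fun v => L (Pi.single v 1)
  have hL : ∀ x : V → ℝ, L x = a ⬝ᵥ x := fun x => by
    conv_lhs => rw [← Finset.univ_sum_single x]
    rw [map_sum, dotProduct]
    refine Finset.sum_congr rfl fun v _ => ?_
    rw [show Pi.single v (x v) = x v • Pi.single v (1 : ℝ) by
      rw [← Pi.single_smul', smul_eq_mul, mul_one], map_smul, smul_eq_mul, mul_comm]
  have hcomp : ∀ Z : Ω → V → ℝ, L ∘ Z = fun ω => a ⬝ᵥ Z ω := fun Z => funext fun ω => hL (Z ω)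
  rw [charFunDual_eq_charFun_map_one, charFunDual_eq_charFun_map_one,
    AEMeasurable.map_map_of_aemeasurable L.continuous.aemeasurable hz.aemeasurable.neg,
    AEMeasurable.map_map_of_aemeasurable L.continuous.aemeasurable hz.aemeasurable, hcomp, hcomp]
  simp only [Pi.neg_apply, dotProduct_neg, ← neg_dotProduct]
  rw [hz.map_dotProduct, hz.map_dotProduct, neg_dotProduct, mulVec_neg, dotProduct_neg, neg_neg]

lemma integral_comp_eq_zero_of_odd [IsFiniteMeasure μ]
    (hz : IsCenteredGaussianVec μ z K) {f : (V → ℝ) → ℝ} (hf : Continuous f)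
    (hodd : ∀ x, f (-x) = -f x) : ∫ ω, f (z ω) ∂μ = 0 := by
  have h : ∫ ω, f (-z ω) ∂μ = ∫ ω, f (z ω) ∂μ := by
    change ∫ ω, f ((-z) ω) ∂μ = _
    rw [← integral_map (f := f) hz.aemeasurable.neg hf.aestronglyMeasurable, hz.map_neg,
      integral_map hz.aemeasurable hf.aestronglyMeasurable]
  simp only [hodd, integral_neg] at h
  linarith

lemma integral_sq_le_two_mul_integral_sq_relu [IsFiniteMeasure μ]
    (hz : IsCenteredGaussianVec μ z K) {x : V → ℝ} (hx : 0 ≤ x) :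
    ∫ ω, (x ⬝ᵥ z ω) ^ 2 ∂μ ≤ 2 * ∫ ω, (x ⬝ᵥ fun v => max (z ω v) 0) ^ 2 ∂μ := by
  set X : Ω → ℝ := fun ω => x ⬝ᵥ z ω
  set Y : Ω → ℝ := fun ω => x ⬝ᵥ |z ω|
  set S : Ω → ℝ := fun ω => x ⬝ᵥ fun v => max (z ω v) 0
  have hX : MemLp X 2 μ := memLp_dotProduct_of_memLp (fun v => hz.memLp_apply v 2) x
  have hY : MemLp Y 2 μ := memLp_dotProduct_of_memLp (fun v => (hz.memLp_apply v 2).abs) x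
  have hS : MemLp S 2 μ := memLp_dotProduct_of_memLp (fun v => (hz.memLp_apply v 2).pos_part) x
  have hXY : ∫ ω, X ω * Y ω ∂μ = 0 :=
    hz.integral_comp_eq_zero_of_odd (f := fun y => (x ⬝ᵥ y) * (x ⬝ᵥ |y|))
      (by simp only [dotProduct, Pi.abs_apply]; fun_prop)
      fun y => by simp [abs_neg]
  have hSXY : ∀ ω, S ω = (X ω + Y ω) / 2 := fun ω => by
    have hrelu : ∀ t : ℝ, max t 0 = (t + |t|) / 2 := fun t => by
      rcases le_total t 0 with ht | ht
      · rw [max_eq_right ht, abs_of_nonpos ht]; ring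
      · rw [max_eq_left ht, abs_of_nonneg ht]; ring
    simp only [S, X, Y, dotProduct, hrelu, Pi.abs_apply, ← Finset.sum_add_distrib, Finset.sum_div]
    exact Finset.sum_congr rfl fun v _ => by ring
  have hXY_le : ∀ ω, |X ω| ≤ Y ω := fun ω =>
    (Finset.abs_sum_le_sum_abs _ _).trans_eq <| Finset.sum_congr rfl fun v _ => by
      rw [abs_mul, abs_of_nonneg (hx v), Pi.abs_apply]
  calc ∫ ω, X ω ^ 2 ∂μ = ∫ ω, X ω ^ 2 + X ω * Y ω ∂μ := by
        rw [integral_add (g := fun ω => X ω * Y ω) hX.integrable_sq (hX.integrable_mul hY), hXY,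
          add_zero]
    _ ≤ ∫ ω, 2 * S ω ^ 2 ∂μ := by
        refine integral_mono (hX.integrable_sq.add (hX.integrable_mul hY))
          (hS.integrable_sq.const_mul 2) fun ω => ?_
        simp only [hSXY]
        nlinarith [sq_abs (X ω), abs_nonneg (X ω), hXY_le ω]
    _ = 2 * ∫ ω, S ω ^ 2 ∂μ := integral_const_mul _ _

lemma dotProduct_mulVec_le_two_mul_secondMoment_relu [IsFiniteMeasure μ]
    (hz : IsCenteredGaussianVec μ z K) {x : V → ℝ} (hx : 0 ≤ x) :
    x ⬝ᵥ K *ᵥ x ≤ 2 * (x ⬝ᵥ secondMoment μ (fun ω v => max (z ω v) 0) *ᵥ x) :=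
  calc x ⬝ᵥ K *ᵥ x ≤ ∫ ω, (x ⬝ᵥ z ω) ^ 2 ∂μ := hz.dotProduct_mulVec_le_integral_sq x
    _ ≤ 2 * ∫ ω, (x ⬝ᵥ fun v => max (z ω v) 0) ^ 2 ∂μ :=
      hz.integral_sq_le_two_mul_integral_sq_relu hx
    _ = _ := by rw [integral_sq_dotProduct fun v => (hz.memLp_apply v 2).pos_part]

end IsCenteredGaussianVec

end

theorem trace_top_eigenspace_lower_bound_general
    {Ω V : Type*} [MeasurableSpace Ω] [Fintype V] [DecidableEq V]
    (μ : Measure Ω) [IsProbabilityMeasure μ]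
    (z : Ω → V → ℝ) (K : Matrix V V ℝ) (hz : IsCenteredGaussianVec μ z K)
    (P : Matrix V V ℝ) (hP : P.IsHermitian) (hpos : ∀ v₁ v₂, 0 ≤ P v₁ v₂)
    (Q : Matrix V V ℝ) (hQsym : Q.IsHermitian) (hQidem : Q * Q = Q)
    (hQrange : ∀ x : V → ℝ,
      P.mulVec (Q.mulVec x) = (⨆ i, hP.eigenvalues i) • Q.mulVec x)
    (hQfix : ∀ x : V → ℝ, P.mulVec x = (⨆ i, hP.eigenvalues i) • x → Q.mulVec x = x)
    (c : ℝ) (hc : 0 < c)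
    (K' : Matrix V V ℝ)
    (hK' : K' = c • (P * Matrix.of (fun v₁ v₂ => ∫ ω, max (z ω v₁) 0 * max (z ω v₂) 0 ∂μ) * P)) :
    (c / 2) * (⨆ i, hP.eigenvalues i) ^ 2 * (K * Q).trace ≤ (K' * Q).trace := by
  set r := ⨆ i, hP.eigenvalues i
  set M := secondMoment μ fun ω v => max (z ω v) 0
  have hr : ∀ i, hP.eigenvalues i ≤ r := fun i => le_ciSup (Set.finite_range _).bddAbove i
  have hQnonneg : ∀ i j, 0 ≤ Q i j :=
    Matrix.apply_nonneg_of_mulVec_abs_mulVec hQsym hQidem fun x =>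
      hQfix _ (hP.mulVec_abs_eq_smul_abs hpos hr (hQrange x))
  have hPQ : P * Q = r • Q := Matrix.ext_of_mulVec_single fun j => by
    rw [← Matrix.mulVec_mulVec, hQrange, Matrix.smul_mulVec]
  have hKM : (K * Q).trace ≤ 2 * (M * Q).trace := by
    rw [hQsym.trace_mul_eq_sum_dotProduct_mulVec hQidem,
      hQsym.trace_mul_eq_sum_dotProduct_mulVec hQidem, Finset.mul_sum]
    exact Finset.sum_le_sum fun j _ =>
      hz.dotProduct_mulVec_le_two_mul_secondMoment_relu fun i => hQnonneg j i
  rw [hK', Matrix.smul_mul, Matrix.trace_smul, hP.trace_mul_mul_mul_eq_sq_mul hQsym hPQ,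
    smul_eq_mul]
  calc c / 2 * r ^ 2 * (K * Q).trace ≤ c / 2 * r ^ 2 * (2 * (M * Q).trace) := by gcongr
    _ = c * (r ^ 2 * (M * Q).trace) := by ring

/-- For a centered Gaussian vector `z` with covariance `K`, a symmetric
matrix `P` with nonnegative entries, `Π₁` the orthogonal projection onto the top eigenspace
of `P` (for `λ₁ = ⨆ i, eigenvalues i`), and `K' = c · P·E[σ(z)σ(z)ᵀ]·P` with `c > 0`,
`tr(K'·Π₁) ≥ (c/2)·λ₁(P)²·tr(K·Π₁)`. -/
theorem trace_top_eigenspace_lower_bound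
    {Ω V : Type*} [MeasurableSpace Ω] [Fintype V] [DecidableEq V] [Nonempty V]
    (μ : Measure Ω) [IsProbabilityMeasure μ]
    (z : Ω → V → ℝ) (K : Matrix V V ℝ) (hz : IsCenteredGaussianVec μ z K)
    (P : Matrix V V ℝ) (hP : P.IsHermitian) (hpos : ∀ v₁ v₂, 0 ≤ P v₁ v₂)
    (Q : Matrix V V ℝ) (hQsym : Q.IsHermitian) (hQidem : Q * Q = Q)
    (hQrange : ∀ x : V → ℝ,
      P.mulVec (Q.mulVec x) = (⨆ i, hP.eigenvalues i) • Q.mulVec x)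
    (hQfix : ∀ x : V → ℝ, P.mulVec x = (⨆ i, hP.eigenvalues i) • x → Q.mulVec x = x)
    (c : ℝ) (hc : 0 < c)
    (K' : Matrix V V ℝ)
    (hK' : K' = c • (P * Matrix.of (fun v₁ v₂ => ∫ ω, max (z ω v₁) 0 * max (z ω v₂) 0 ∂μ) * P)) :
    (c / 2) * (⨆ i, hP.eigenvalues i) ^ 2 * (K * Q).trace ≤ (K' * Q).trace :=
  trace_top_eigenspace_lower_bound_general μ z K hz P hP hpos Q hQsym hQidem hQrange hQfix c hc K'
    hK'
end
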